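/- arXiv:1806.02663 — 3 statements merged into one kernel-verified Lean document; each statement's English description precedes it below -/
import Mathlib

section
/- Let (E, ρ_θ) be a b_v(θ) metric space with θ bounded, and let {u_n} be a sequence in E with u_n ≠ u_m for all distinct n, m ∈ ℕ. If there exist c ∈ [0,1) and constants k₁, k₂ ≥ 0 such that ρ_θ(u_m, u_n) ≤ c ρ_θ(u_{m-1}, u_{n-1}) + k₁ c^m + k₂ c^n for all n, m ∈ ℕ, then {u_n} is a Cauchy sequence, i.e., ρ_θ(u_n, u_m) → 0 as n, m → ∞. -/
open Filter Topology

/-- A `b_v(θ)` metric on `E`. -/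
structure IsBvTheta (E : Type*) (ρ : E → E → ℝ) (θ : E → E → ℝ) (v : ℕ) : Prop where
  hv : 1 ≤ v
  theta_ge_one : ∀ u w, 1 ≤ θ u w
  nonneg : ∀ u w, 0 ≤ ρ u w
  zero_iff : ∀ u w, ρ u w = 0 ↔ u = w
  symm : ∀ u w, ρ u w = ρ w u
  quad : ∀ u w (z : ℕ → E), u ≠ w →
    (∀ i ∈ Finset.Icc 1 v, z i ≠ u ∧ z i ≠ w) →
    (∀ i ∈ Finset.Icc 1 v, ∀ j ∈ Finset.Icc 1 v, i ≠ j → z i ≠ z j) →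
    ρ u w ≤ θ u w *
      (ρ u (z 1) + (∑ i ∈ Finset.Icc 1 (v - 1), ρ (z i) (z (i + 1))) + ρ (z v) w)

/-- Cauchy sequence in a `b_v(θ)` metric space. -/
def ThetaCauchy {E : Type*} (ρ : E → E → ℝ) (u : ℕ → E) : Prop :=
  ∀ ε > (0 : ℝ), ∃ n₀ : ℕ, ∀ n ≥ n₀, ∀ p > 0, ρ (u n) (u (n + p)) < ε

/-- Completeness of a `b_v(θ)` metric space. -/
def ThetaComplete {E : Type*} (ρ : E → E → ℝ) : Prop :=
  ∀ u : ℕ → E, ThetaCauchy ρ u → ∃ x : E, Tendsto (fun n => ρ (u n) x) atTop (𝓝 0)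

/-- Lemma: under the displayed contraction-type inequality the sequence is Cauchy. -/
theorem stmt_11 {E : Type*} (ρ θ : E → E → ℝ) (v : ℕ)
    (h : IsBvTheta E ρ θ v) (hbdd : ∃ M : ℝ, ∀ u w, θ u w ≤ M)
    (u : ℕ → E) (hinj : ∀ n m : ℕ, n ≠ m → u n ≠ u m)
    (c k₁ k₂ : ℝ) (hc0 : 0 ≤ c) (hc1 : c < 1) (hk₁ : 0 ≤ k₁) (hk₂ : 0 ≤ k₂)
    (hineq : ∀ m n : ℕ, ρ (u (m + 1)) (u (n + 1)) ≤
      c * ρ (u m) (u n) + k₁ * c ^ (m + 1) + k₂ * c ^ (n + 1)) :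
    ThetaCauchy ρ u := by
  obtain ⟨M₀, hM₀⟩ := hbdd
  set M : ℝ := max M₀ 1 with hMdef
  have hM1 : (1:ℝ) ≤ M := le_max_right _ _
  have hM0 : (0:ℝ) < M := lt_of_lt_of_le one_pos hM1
  have hMθ : ∀ a b, θ a b ≤ M := fun a b => (hM₀ a b).trans (le_max_left _ _)
  set K : ℝ := k₁ + k₂ with hKdef
  have hK0 : 0 ≤ K := add_nonneg hk₁ hk₂
  have hvnat : 1 ≤ v := h.hv
  -- geometric helper
  have hgeom1 : ∀ x : ℝ, 0 ≤ x → x < 1 → ∀ n : ℕ, ((n:ℝ)+1) * x^n * (1-x) ≤ 1 := by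
    intro x h0 h1 n
    have hsum : ((n:ℝ)+1) * x^n ≤ ∑ i ∈ Finset.range (n+1), x^i := by
      have h2 : ∀ i ∈ Finset.range (n+1), x^n ≤ x^i := fun i hi =>
        pow_le_pow_of_le_one h0 h1.le (Nat.le_of_lt_succ (Finset.mem_range.mp hi))
      have h3 := Finset.sum_le_sum h2
      rw [Finset.sum_const, Finset.card_range] at h3
      have : ((n:ℝ)+1) * x^n = (n+1) • x^n := by
        rw [nsmul_eq_mul]; push_cast; ring
      rw [this]; exact h3
    have h4 : (∑ i ∈ Finset.range (n+1), x^i) * (1-x) = 1 - x^(n+1) := by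
      have h5 := geom_sum_mul x (n+1)
      linear_combination -h5
    have h6 : 0 ≤ x^(n+1) := pow_nonneg h0 _
    have h7 : (0:ℝ) ≤ 1 - x := by linarith
    have h8 := mul_le_mul_of_nonneg_right hsum h7
    rw [h4] at h8
    linarith
  -- Lemma A : iterated contraction
  have hA : ∀ q n : ℕ, ρ (u n) (u (n+q)) ≤ c^n * (ρ (u 0) (u q) + (n:ℝ) * K) := by
    intro q n
    induction n with
    | zero => simp
    | succ n ih =>
      have e : n + 1 + q = (n + q) + 1 := by omega
      rw [e]
      have h1 := hineq n (n+q)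
      have hcq : c ^ (n+q+1) ≤ c ^ (n+1) := pow_le_pow_of_le_one hc0 hc1.le (by omega)
      have h2 := mul_le_mul_of_nonneg_left ih hc0
      have h3 := mul_le_mul_of_nonneg_left hcq hk₂
      calc ρ (u (n+1)) (u (n+q+1)) ≤ c * ρ (u n) (u (n+q)) + k₁ * c^(n+1) + k₂ * c^(n+q+1) := h1
        _ ≤ c * (c^n * (ρ (u 0) (u q) + (n:ℝ)*K)) + k₁*c^(n+1) + k₂*c^(n+1) := by linarith
        _ = c^(n+1) * (ρ (u 0) (u q) + ((n:ℕ):ℝ)*K + K) := by rw [hKdef]; ring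
        _ = c^(n+1) * (ρ (u 0) (u q) + ((n+1:ℕ):ℝ)*K) := by push_cast; ring
  -- choice of r, s, δ
  set r : ℝ := (1+c)/2 with hrdef
  have hr0 : (0:ℝ) ≤ r := by rw [hrdef]; linarith
  have hrc : c ≤ r := by rw [hrdef]; linarith
  have hr1 : r < 1 := by rw [hrdef]; linarith
  set s : ℝ := Real.sqrt r with hsdef
  have hs0 : (0:ℝ) ≤ s := Real.sqrt_nonneg r
  have hs1 : s < 1 := by
    have := Real.sqrt_lt_sqrt hr0 hr1
    simpa [hsdef] using this
  have hss : s * s = r := Real.mul_self_sqrt hr0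
  have h1s : (0:ℝ) < 1 - s := by linarith
  obtain ⟨δ₀, hδ₀⟩ := exists_pow_lt_of_lt_one
    (show (0:ℝ) < (1-s)/(2*M) from div_pos h1s (by linarith)) hs1
  set δ : ℕ := max (max δ₀ v) 1 with hδdef
  have hδ1 : 1 ≤ δ := le_max_right _ _
  have hδv : v ≤ δ := le_trans (le_max_right δ₀ v) (le_max_left _ _)
  have hsδ : s^δ < (1-s)/(2*M) :=
    lt_of_le_of_lt (pow_le_pow_of_le_one hs0 hs1.le
      (le_trans (le_max_left δ₀ v) (le_max_left _ _))) hδ₀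
  have hsδ2 : s^δ * (2*M) < 1-s := by
    rw [lt_div_iff₀ (by linarith : (0:ℝ) < 2*M)] at hsδ; exact hsδ
  have hMr : M * (((δ:ℝ)+1) * r^δ) ≤ 1/2 := by
    have h1 := hgeom1 s hs0 hs1 δ
    have hrδ : r^δ = s^δ * s^δ := by rw [← hss, mul_pow]
    apply le_of_mul_le_mul_right _ h1s
    rw [hrδ]
    have h4 := mul_le_mul_of_nonneg_left h1 (mul_nonneg hM0.le (pow_nonneg hs0 δ))
    linarith only [h4, hsδ2]
  -- constants
  set a₁ : ℝ := ρ (u 0) (u 1) with ha₁def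
  have ha₁0 : 0 ≤ a₁ := h.nonneg _ _
  set Dc : ℝ := 1/(1-c) with hDcdef
  have hDc : ∀ g : ℕ, ((g:ℝ)+1) * c^g ≤ Dc := by
    intro g
    rw [hDcdef, le_div_iff₀ (by linarith : (0:ℝ) < 1-c)]
    exact hgeom1 c hc0 hc1 g
  have hDc0 : 0 ≤ Dc := by
    rw [hDcdef]; exact le_of_lt (div_pos one_pos (by linarith))
  set B : ℝ := ∑ q ∈ Finset.Icc 1 δ, ρ (u 0) (u q) with hBdef
  have hB0 : 0 ≤ B := Finset.sum_nonneg fun q _ => h.nonneg _ _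
  have hBq : ∀ q, 1 ≤ q → q ≤ δ → ρ (u 0) (u q) ≤ B := fun q h1 h2 =>
    Finset.single_le_sum (f := fun q => ρ (u 0) (u q)) (fun i _ => h.nonneg _ _)
      (Finset.mem_Icc.mpr ⟨h1, h2⟩)
  set C₁ : ℝ := a₁ + K * ((v:ℝ)+1) * Dc with hC₁def
  have hv0 : (0:ℝ) ≤ (v:ℝ) := Nat.cast_nonneg v
  have hC₁0 : 0 ≤ C₁ := by
    rw [hC₁def]
    exact add_nonneg ha₁0 (mul_nonneg (mul_nonneg hK0 (by positivity)) hDc0)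
  have hPt1 : (0:ℝ) ≤ 4*M*(B+K) := by
    have := mul_nonneg hM0.le (add_nonneg hB0 hK0)
    linarith only [this]
  have hPt2 : (0:ℝ) ≤ 4*M*(v:ℝ)*C₁ := by
    have := mul_nonneg (mul_nonneg hM0.le hv0) hC₁0
    linarith only [this]
  set P : ℝ := 4*M*(B+K) + 4*M*(v:ℝ)*C₁ + (B+K) + 1 with hPdef
  have hP0 : (0:ℝ) < P := by
    rw [hPdef]; linarith only [hPt1, hPt2, hB0, hK0]
  have hP1 : B + K ≤ P := by rw [hPdef]; linarith only [hPt1, hPt2]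
  have hP2 : 4*M*(B+K) ≤ P := by rw [hPdef]; linarith only [hPt2, hB0, hK0]
  have hP3 : 4*M*(v:ℝ)*C₁ ≤ P := by rw [hPdef]; linarith only [hPt1, hB0, hK0]
  clear_value M K r s δ a₁ Dc B C₁ P
  -- main claim
  have key : ∀ g n : ℕ, ρ (u n) (u (n+g)) ≤ P * ((n:ℝ)+1) * r^n := by
    intro g
    induction g using Nat.strong_induction_on with
    | _ g ih =>
      intro n
      have hn0 : (0:ℝ) ≤ (n:ℝ) := Nat.cast_nonneg n
      have hn1 : (0:ℝ) ≤ (n:ℝ)+1 := by linarith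
      have hcn : (0:ℝ) ≤ c^n := pow_nonneg hc0 n
      have hrn : (0:ℝ) ≤ r^n := pow_nonneg hr0 n
      have hcrn : c^n ≤ r^n := pow_le_pow_left₀ hc0 hrc n
      rcases Nat.eq_zero_or_pos g with hg0 | hgpos
      · subst hg0
        have hz : ρ (u n) (u (n+0)) = 0 := by
          rw [Nat.add_zero]; exact (h.zero_iff _ _).mpr rfl
        rw [hz]
        have := mul_nonneg (mul_nonneg hP0.le hn1) hrn
        linarith only [this]
      rcases le_or_gt g δ with hgδ | hgδ
      · -- small gap
        have hBg := hBq g hgpos hgδ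
        have h1 := hA g n
        have h2 : c^n * (ρ (u 0) (u g) + (n:ℝ)*K) ≤ c^n * (B + (n:ℝ)*K) :=
          mul_le_mul_of_nonneg_left (by linarith only [hBg]) hcn
        have h3 : B + (n:ℝ)*K ≤ (B+K)*((n:ℝ)+1) := by
          have := mul_nonneg hn0 hB0
          linarith only [this, hK0]
        have h4 : c^n * (B + (n:ℝ)*K) ≤ c^n * ((B+K)*((n:ℝ)+1)) :=
          mul_le_mul_of_nonneg_left h3 hcn
        have h5 : c^n * ((B+K)*((n:ℝ)+1)) ≤ r^n * ((B+K)*((n:ℝ)+1)) :=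
          mul_le_mul_of_nonneg_right hcrn (mul_nonneg (add_nonneg hB0 hK0) hn1)
        have h6 : (B+K)*(((n:ℝ)+1)*r^n) ≤ P*(((n:ℝ)+1)*r^n) :=
          mul_le_mul_of_nonneg_right hP1 (mul_nonneg hn1 hrn)
        linarith only [h1, h2, h4, h5, h6]
      · -- big gap : δ < g
        set z : ℕ → E := fun i => if i = 1 then u (n+δ) else u (n+g+v+1-i) with hzdef
        have hz1 : z 1 = u (n+δ) := by simp [hzdef]
        have hzval : ∀ i, i ≠ 1 → z i = u (n+g+v+1-i) := by
          intro i hi; simp only [hzdef]; rw [if_neg hi]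
        have hne : u n ≠ u (n+g) := hinj _ _ (by omega)
        have hcond1 : ∀ i ∈ Finset.Icc 1 v, z i ≠ u n ∧ z i ≠ u (n+g) := by
          intro i hi
          rw [Finset.mem_Icc] at hi
          by_cases h1 : i = 1
          · subst h1; rw [hz1]
            exact ⟨hinj _ _ (by omega), hinj _ _ (by omega)⟩
          · rw [hzval i h1]
            exact ⟨hinj _ _ (by omega), hinj _ _ (by omega)⟩
        have hcond2 : ∀ i ∈ Finset.Icc 1 v, ∀ j ∈ Finset.Icc 1 v, i ≠ j → z i ≠ z j := by
          intro i hi j hj hij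
          rw [Finset.mem_Icc] at hi hj
          by_cases h1 : i = 1 <;> by_cases h2 : j = 1
          · exact absurd (h1.trans h2.symm) hij
          · subst h1; rw [hz1, hzval j h2]; exact hinj _ _ (by omega)
          · subst h2; rw [hz1, hzval i h1]; exact hinj _ _ (by omega)
          · rw [hzval i h1, hzval j h2]; exact hinj _ _ (by omega)
        have hquad := h.quad (u n) (u (n+g)) z hne hcond1 hcond2
        -- term bounds
        have hterm_a : ρ (u n) (z 1) ≤ c^n * (B + (n:ℝ)*K) := by
          rw [hz1]
          have h1 := hA δ n
          have h2 : c^n * (ρ (u 0) (u δ) + (n:ℝ)*K) ≤ c^n * (B + (n:ℝ)*K) :=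
            mul_le_mul_of_nonneg_left (by linarith only [hBq δ hδ1 le_rfl]) hcn
          linarith only [h1, h2]
        have hrec : ρ (u (n+δ)) (u (n+g+v-1)) ≤ P * ((n:ℝ)+(δ:ℝ)+1) * r^(n+δ) := by
          have h1 := ih (g+v-1-δ) (by omega) (n+δ)
          rw [show (n+δ)+(g+v-1-δ) = n+g+v-1 from by omega] at h1
          push_cast at h1 ⊢
          linarith only [h1]
        have hedge : ∀ j : ℕ, n+g ≤ j → j ≤ n+g+v →
            ρ (u j) (u (j+1)) ≤ c^(n+g) * (a₁ + ((n:ℝ)+(g:ℝ)+(v:ℝ))*K) := by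
          intro j hj1 hj2
          have h1 := hA 1 j
          rw [← ha₁def] at h1
          have e1 : c^j ≤ c^(n+g) := pow_le_pow_of_le_one hc0 hc1.le hj1
          have e2 : (j:ℝ) ≤ (n:ℝ)+(g:ℝ)+(v:ℝ) := by
            have := (Nat.cast_le (α := ℝ)).mpr hj2
            push_cast at this; linarith only [this]
          have e3 : a₁ + (j:ℝ)*K ≤ a₁ + ((n:ℝ)+(g:ℝ)+(v:ℝ))*K := by
            have := mul_le_mul_of_nonneg_right e2 hK0
            linarith only [this]
          calc ρ (u j) (u (j+1)) ≤ c^j * (a₁ + (j:ℝ)*K) := h1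
            _ ≤ c^(n+g) * (a₁ + ((n:ℝ)+(g:ℝ)+(v:ℝ))*K) :=
                mul_le_mul e1 e3
                  (add_nonneg ha₁0 (mul_nonneg (Nat.cast_nonneg j) hK0))
                  (pow_nonneg hc0 _)
        have hE0 : (0:ℝ) ≤ c^(n+g) * (a₁ + ((n:ℝ)+(g:ℝ)+(v:ℝ))*K) := by
          have hx : (0:ℝ) ≤ (n:ℝ)+(g:ℝ)+(v:ℝ) := by positivity
          exact mul_nonneg (pow_nonneg hc0 _) (add_nonneg ha₁0 (mul_nonneg hx hK0))
        -- bracket bound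
        have hQ : ρ (u n) (z 1) + (∑ i ∈ Finset.Icc 1 (v-1), ρ (z i) (z (i+1)))
              + ρ (z v) (u (n+g)) ≤
            c^n * (B + (n:ℝ)*K) + P * ((n:ℝ)+(δ:ℝ)+1) * r^(n+δ)
              + ((v:ℝ)-1) * (c^(n+g) * (a₁ + ((n:ℝ)+(g:ℝ)+(v:ℝ))*K)) := by
          rcases eq_or_lt_of_le hvnat with hv1 | hv2
          · -- v = 1
            have hvv : v = 1 := hv1.symm
            have hempty : Finset.Icc 1 (v-1) = ∅ := Finset.Icc_eq_empty (by omega)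
            have hzv : z v = u (n+δ) := by rw [hvv]; exact hz1
            rw [hempty, Finset.sum_empty, hzv, hz1]
            rw [show n+g+v-1 = n+g from by omega] at hrec
            have hv0' : ((v:ℝ)-1) = 0 := by rw [hvv]; norm_num
            rw [hv0', zero_mul, add_zero]
            linarith only [hterm_a, hrec, hz1 ▸ hterm_a]
          · -- 2 ≤ v
            have h2v : 2 ≤ v := hv2
            have hzv : z v = u (n+g+1) := by
              rw [hzval v (by omega)]; exact congrArg u (by omega)
            have hlast : ρ (z v) (u (n+g)) ≤ c^(n+g) * (a₁ + ((n:ℝ)+(g:ℝ)+(v:ℝ))*K) := by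
              rw [hzv]
              exact (h.symm _ _).le.trans (hedge (n+g) le_rfl (by omega))
            have h1mem : (1:ℕ) ∈ Finset.Icc 1 (v-1) := Finset.mem_Icc.mpr ⟨le_rfl, by omega⟩
            have hsplit := (Finset.sum_erase_add (Finset.Icc 1 (v-1))
              (fun i => ρ (z i) (z (i+1))) h1mem).symm
            have hz2 : z (1+1) = u (n+g+v-1) := by
              rw [hzval (1+1) (by omega)]; exact congrArg u (by omega)
            have hf1 : ρ (z 1) (z (1+1)) ≤ P * ((n:ℝ)+(δ:ℝ)+1) * r^(n+δ) := by
              rw [hz1, hz2]; exact hrec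
            have herase : ∑ i ∈ (Finset.Icc 1 (v-1)).erase 1, ρ (z i) (z (i+1)) ≤
                ((v:ℝ)-2) * (c^(n+g) * (a₁ + ((n:ℝ)+(g:ℝ)+(v:ℝ))*K)) := by
              have hcard : ((Finset.Icc 1 (v-1)).erase 1).card = v - 2 := by
                rw [Finset.card_erase_of_mem h1mem, Nat.card_Icc]; omega
              have hb : ∀ i ∈ (Finset.Icc 1 (v-1)).erase 1,
                  ρ (z i) (z (i+1)) ≤ c^(n+g) * (a₁ + ((n:ℝ)+(g:ℝ)+(v:ℝ))*K) := by
                intro i hi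
                have hi1 : i ≠ 1 := (Finset.mem_erase.mp hi).1
                have hi2 := Finset.mem_Icc.mp (Finset.mem_erase.mp hi).2
                have e1 : z i = u ((n+g+v-i)+1) := by
                  rw [hzval i hi1]; exact congrArg u (by omega)
                have e2 : z (i+1) = u (n+g+v-i) := by
                  rw [hzval (i+1) (by omega)]; exact congrArg u (by omega)
                rw [e1, e2]
                exact (h.symm _ _).le.trans (hedge (n+g+v-i) (by omega) (by omega))
              have h1 := Finset.sum_le_card_nsmul _ _ _ hb
              rw [hcard] at h1
              have h2 : ((v-2:ℕ):ℝ) = (v:ℝ)-2 := by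
                push_cast [Nat.cast_sub h2v]; ring
              rw [nsmul_eq_mul, h2] at h1
              exact h1
            rw [hsplit]
            linarith only [hterm_a, hf1, herase, hlast, hE0]
        -- assemble
        have hQ0 : (0:ℝ) ≤ ρ (u n) (z 1) + (∑ i ∈ Finset.Icc 1 (v-1), ρ (z i) (z (i+1)))
              + ρ (z v) (u (n+g)) :=
          add_nonneg (add_nonneg (h.nonneg _ _)
            (Finset.sum_nonneg fun i _ => h.nonneg _ _)) (h.nonneg _ _)
        have hMQ : ρ (u n) (u (n+g)) ≤
            M * (c^n * (B + (n:ℝ)*K) + P * ((n:ℝ)+(δ:ℝ)+1) * r^(n+δ)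
              + ((v:ℝ)-1) * (c^(n+g) * (a₁ + ((n:ℝ)+(g:ℝ)+(v:ℝ))*K))) := by
          calc ρ (u n) (u (n+g)) ≤ θ (u n) (u (n+g)) * _ := hquad
            _ ≤ M * _ := mul_le_mul_of_nonneg_right (hMθ _ _) hQ0
            _ ≤ _ := mul_le_mul_of_nonneg_left hQ hM0.le
        -- (i)
        have hi1 : M * (c^n * (B + (n:ℝ)*K)) ≤ P/4 * (((n:ℝ)+1)*r^n) := by
          have a1 : B + (n:ℝ)*K ≤ (B+K)*((n:ℝ)+1) := by
            have := mul_nonneg hn0 hB0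
            linarith only [this, hK0]
          have t1 := mul_le_mul_of_nonneg_left a1 hcn
          have t2 := mul_le_mul_of_nonneg_right hcrn
            (mul_nonneg (add_nonneg hB0 hK0) hn1)
          have a2 : c^n*(B+(n:ℝ)*K) ≤ (B+K)*((n:ℝ)+1)*r^n := by linarith only [t1, t2]
          have a3 : M*(B+K) ≤ P/4 := by linarith only [hP2]
          have u1 := mul_le_mul_of_nonneg_left a2 hM0.le
          have u2 := mul_le_mul_of_nonneg_right a3 (mul_nonneg hn1 hrn)
          linarith only [u1, u2]
        -- (ii)
        have hi2 : M * (P * ((n:ℝ)+(δ:ℝ)+1) * r^(n+δ)) ≤ P/2 * (((n:ℝ)+1)*r^n) := by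
          have hδ0 : (0:ℝ) ≤ (δ:ℝ) := Nat.cast_nonneg δ
          have hrδ0 : (0:ℝ) ≤ r^δ := pow_nonneg hr0 δ
          have b1 : ((n:ℝ)+(δ:ℝ)+1) ≤ ((n:ℝ)+1)*((δ:ℝ)+1) := by
            have := mul_nonneg hn0 hδ0
            linarith only [this]
          have b2 : M*(((n:ℝ)+(δ:ℝ)+1)*r^δ) ≤ ((n:ℝ)+1)*(1/2) := by
            have t1 := mul_le_mul_of_nonneg_right b1 hrδ0
            have t2 := mul_le_mul_of_nonneg_left t1 hM0.le
            have t3 := mul_le_mul_of_nonneg_left hMr hn1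
            linarith only [t2, t3]
          have b4 := mul_le_mul_of_nonneg_left b2 (mul_nonneg hP0.le hrn)
          rw [pow_add]
          linarith only [b4]
        -- (iii)
        have hi3 : M * (((v:ℝ)-1) * (c^(n+g) * (a₁ + ((n:ℝ)+(g:ℝ)+(v:ℝ))*K))) ≤
            P/4 * (((n:ℝ)+1)*r^n) := by
          have hg0' : (0:ℝ) ≤ (g:ℝ) := Nat.cast_nonneg g
          have hv1R : (1:ℝ) ≤ (v:ℝ) := by exact_mod_cast hvnat
          have hcg : (0:ℝ) ≤ c^g := pow_nonneg hc0 g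
          have c1 : a₁ + ((n:ℝ)+(g:ℝ)+(v:ℝ))*K ≤ ((n:ℝ)+1)*(a₁+((g:ℝ)+(v:ℝ)+1)*K) := by
            have w1 := mul_nonneg hn0 ha₁0
            have w2 := mul_nonneg (mul_nonneg hn0 hg0') hK0
            have w3 := mul_nonneg (mul_nonneg hn0 hv0) hK0
            linarith only [w1, w2, w3, hK0]
          have c2 : c^g*(a₁+((g:ℝ)+(v:ℝ)+1)*K) ≤ C₁ := by
            have d1 : c^g ≤ 1 := pow_le_one₀ hc0 hc1.le
            have d2 : ((g:ℝ)+1)*c^g ≤ Dc := hDc g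
            have d3 : ((g:ℝ)+(v:ℝ)+1) ≤ ((v:ℝ)+1)*((g:ℝ)+1) := by
              have := mul_nonneg hv0 hg0'
              linarith only [this]
            have d4 := mul_le_mul_of_nonneg_right d3 (mul_nonneg hK0 hcg)
            have d5 : K*((v:ℝ)+1)*(((g:ℝ)+1)*c^g) ≤ K*((v:ℝ)+1)*Dc :=
              mul_le_mul_of_nonneg_left d2 (mul_nonneg hK0 (by linarith only [hv0]))
            have d6 := mul_le_mul_of_nonneg_right d1 ha₁0
            rw [hC₁def]
            linarith only [d4, d5, d6]
          have c3 : c^(n+g)*(a₁+((n:ℝ)+(g:ℝ)+(v:ℝ))*K) ≤ ((n:ℝ)+1)*r^n*C₁ := by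
            have t1 := mul_le_mul_of_nonneg_left c1 (pow_nonneg hc0 (n+g))
            rw [pow_add] at t1
            have t2 := mul_le_mul_of_nonneg_left c2 (mul_nonneg hn1 hcn)
            have t3 := mul_le_mul_of_nonneg_right
              (mul_le_mul_of_nonneg_left hcrn hn1) hC₁0
            rw [pow_add]
            linarith only [t1, t2, t3]
          have c4 : ((v:ℝ)-1) * (c^(n+g)*(a₁+((n:ℝ)+(g:ℝ)+(v:ℝ))*K)) ≤
              (v:ℝ) * (((n:ℝ)+1)*r^n*C₁) := by
            have := mul_nonneg hv0 (sub_nonneg.mpr c3)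
            linarith only [this, hE0]
          have c5 := mul_le_mul_of_nonneg_left c4 hM0.le
          have c6 : M*(v:ℝ)*C₁ ≤ P/4 := by linarith only [hP3]
          have c7 := mul_le_mul_of_nonneg_right c6 (mul_nonneg hn1 hrn)
          linarith only [c5, c7]
        linarith only [hMQ, hi1, hi2, hi3]
  -- conclusion
  intro ε hε
  set Ds : ℝ := 1/(1-s) with hDsdef
  have hDspos : (0:ℝ) < Ds := by rw [hDsdef]; exact div_pos one_pos h1s
  have hDs : ∀ m : ℕ, ((m:ℝ)+1) * s^m ≤ Ds := by
    intro m
    rw [hDsdef, le_div_iff₀ h1s]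
    exact hgeom1 s hs0 hs1 m
  clear_value Ds
  obtain ⟨n₀, hn₀⟩ := exists_pow_lt_of_lt_one
    (show (0:ℝ) < ε*(1-s)/P from div_pos (mul_pos hε h1s) hP0) hs1
  refine ⟨n₀, fun n hn p hp => ?_⟩
  have hkey := key p n
  have h5 : ((n:ℝ)+1)*r^n ≤ Ds * s^n := by
    have h6 := mul_le_mul_of_nonneg_right (hDs n) (pow_nonneg hs0 n)
    have h7 : r^n = s^n * s^n := by rw [← hss, mul_pow]
    rw [h7]; linarith only [h6]
  have h8 : s^n₀ * P < ε*(1-s) := by rw [lt_div_iff₀ hP0] at hn₀; exact hn₀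
  have h9 : s^n ≤ s^n₀ := pow_le_pow_of_le_one hs0 hs1.le hn
  have h10 : (1-s)*Ds = 1 := by
    rw [hDsdef]; field_simp
  have h11 : P * (Ds * s^n₀) < ε := by
    have h12 := mul_lt_mul_of_pos_right h8 hDspos
    have h13 : ε*(1-s)*Ds = ε := by rw [mul_assoc, h10, mul_one]
    linarith only [h12, h13]
  calc ρ (u n) (u (n+p)) ≤ P * ((n:ℝ)+1) * r^n := hkey
    _ ≤ P * (Ds * s^n) := by
        have := mul_le_mul_of_nonneg_left h5 hP0.le
        linarith only [this]
    _ ≤ P * (Ds * s^n₀) := by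
        have := mul_le_mul_of_nonneg_left
          (mul_le_mul_of_nonneg_left h9 hDspos.le) hP0.le
        linarith only [this]
    _ < ε := h11
end

section
/- Let (E, ρ_θ) be a complete b_v(θ) metric space with θ bounded, and S : E → E a mapping satisfying ρ_θ(Su, Sw) ≤ α ρ_θ(u,w) + β ρ_θ(u,Su) + γ ρ_θ(w,Sw) for all u, w ∈ E, where α, β, γ ≥ 0, α + β + γ < 1, and min{β, γ} < 1 / sup{θ(u,Su), θ(Su,u) : u ∈ E}. Then S has a unique fixed point, and for any u₀ ∈ E the sequence u_n = S u_{n-1} converges to this fixed point. -/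
open Filter Topology

private lemma geom_aux {r : ℝ} (h0 : 0 ≤ r) (h1 : r < 1) (n : ℕ) :
    ∑ i ∈ Finset.range n, r ^ i ≤ 1 / (1 - r) := by
  have hr : 0 < 1 - r := by linarith
  have he : ∑ i ∈ Finset.range n, r ^ i = (1 - r ^ n) / (1 - r) := by
    induction n with
    | zero => simp
    | succ m ih =>
      rw [Finset.sum_range_succ, ih]
      field_simp
      ring
  rw [he]
  gcongr
  nlinarith [pow_nonneg h0 n]

set_option maxHeartbeats 4000000 in
private lemma exists_fix {E : Type*} (ρ θ : E → E → ℝ) (v : ℕ)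
    (h : IsBvTheta E ρ θ v) (hcomp : ThetaComplete ρ)
    (hbdd : ∃ M : ℝ, ∀ u w, θ u w ≤ M)
    (S : E → E) (α β γ : ℝ) (hα : 0 ≤ α) (hβ : 0 ≤ β) (hγ : 0 ≤ γ)
    (hsum : α + β + γ < 1)
    (hΓ : min β γ <
      1 / sSup ((Set.range fun u => θ u (S u)) ∪ (Set.range fun u => θ (S u) u)))
    (hS : ∀ u w, ρ (S u) (S w) ≤ α * ρ u w + β * ρ u (S u) + γ * ρ w (S w))
    (u₀ : E) :
    ∃ x : E, S x = x ∧ Tendsto (fun n => ρ (S^[n] u₀) x) atTop (𝓝 0) := by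
  classical
  have hρnn := h.nonneg
  have hsym := h.symm
  have hzero := h.zero_iff
  have hα1 : α < 1 := by linarith
  have hγ1 : γ < 1 := by linarith
  have hβ1 : β ≤ 1 := by linarith
  set u : ℕ → E := fun n => S^[n] u₀ with hu_def
  have hu_succ : ∀ n, u (n + 1) = S (u n) := fun n => Function.iterate_succ_apply' S n u₀
  set d : ℕ → ℝ := fun n => ρ (u n) (u (n + 1)) with hd_def
  have hd0 : ∀ n, 0 ≤ d n := fun n => hρnn _ _
  set l : ℝ := (α + β) / (1 - γ) with hl_def
  have hl0 : 0 ≤ l := div_nonneg (by linarith) (by linarith)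
  have hl1 : l < 1 := (div_lt_one (by linarith)).mpr (by linarith)
  have hdstep : ∀ n, d (n + 1) ≤ l * d n := by
    intro n
    have h1 := hS (u n) (u (n + 1))
    rw [← hu_succ n, ← hu_succ (n + 1)] at h1
    have h2 : d (n + 1) * (1 - γ) ≤ (α + β) * d n := by
      simp only [hd_def] at h1 ⊢
      nlinarith [h1]
    rw [hl_def, div_mul_eq_mul_div, le_div_iff₀ (by linarith : (0:ℝ) < 1 - γ)]
    linarith
  have hdgeo : ∀ n, d n ≤ d 0 * l ^ n := by
    intro n
    induction n with
    | zero => simp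
    | succ m ih =>
      calc d (m + 1) ≤ l * d m := hdstep m
        _ ≤ l * (d 0 * l ^ m) := mul_le_mul_of_nonneg_left ih hl0
        _ = d 0 * l ^ (m + 1) := by ring
  by_cases hfin : ∃ N, u (N + 1) = u N
  · -- Case A : the orbit stabilizes
    obtain ⟨N, hN⟩ := hfin
    refine ⟨u N, (hu_succ N).symm.trans hN, ?_⟩
    have hconst : ∀ k, u (N + k) = u N := by
      intro k
      induction k with
      | zero => rfl
      | succ m ih =>
        calc u ((N + m) + 1) = S (u (N + m)) := hu_succ _
          _ = S (u N) := by rw [ih]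
          _ = u (N + 1) := (hu_succ N).symm
          _ = u N := hN
    have hev : ∀ᶠ n in atTop, (0:ℝ) = ρ (S^[n] u₀) (u N) := by
      filter_upwards [eventually_ge_atTop N] with n hn
      have h2 : u n = u N := by
        have h3 := hconst (n - N)
        rwa [Nat.add_sub_cancel' hn] at h3
      have : ρ (u n) (u N) = 0 := by rw [h2]; exact (hzero _ _).mpr rfl
      exact this.symm
    exact Tendsto.congr' hev tendsto_const_nhds
  · -- Case B : all orbit points distinct
    push_neg at hfin
    have hlpos : 0 < l := by
      rcases eq_or_lt_of_le hl0 with h0 | h0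
      · exfalso
        have h1 : d 1 ≤ 0 := by
          have := hdgeo 1
          rw [← h0] at this
          simpa using this
        have h2 : d 1 = 0 := le_antisymm h1 (hd0 1)
        exact hfin 1 ((hzero _ _).mp h2).symm
      · exact h0
    have hdpos : ∀ n, 0 < d n := by
      intro n
      rcases eq_or_lt_of_le (hd0 n) with h0 | h0
      · exact absurd ((hzero _ _).mp h0.symm).symm (hfin n)
      · exact h0
    -- injectivity of the orbit
    have hinjlt : ∀ a b, a < b → u a ≠ u b := by
      intro a b hab heq
      have hper : ∀ t, u (a + (b - a) + t) = u (a + t) := by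
        intro t
        induction t with
        | zero =>
          simp only [Nat.add_zero]
          rw [show a + (b - a) = b from by omega]
          exact heq.symm
        | succ m ih =>
          show u ((a + (b - a) + m) + 1) = u ((a + m) + 1)
          rw [hu_succ, hu_succ, ih]
      have hper2 : ∀ k, u (a + k * (b - a)) = u a := by
        intro k
        induction k with
        | zero => simp
        | succ m ih =>
          rw [show a + (m + 1) * (b - a) = a + (b - a) + m * (b - a) from by ring]
          rw [hper (m * (b - a))]
          exact ih
      have hdk : ∀ k, d a = d (a + k * (b - a)) := by
        intro k
        show ρ (u a) (u (a + 1)) = ρ (u (a + k * (b - a))) (u (a + k * (b - a) + 1))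
        rw [hu_succ, hu_succ, hper2 k]
      obtain ⟨m, hm⟩ : ∃ m, d 0 * l ^ m < d a := by
        have ht : Tendsto (fun m : ℕ => d 0 * l ^ m) atTop (𝓝 0) := by
          simpa using (tendsto_pow_atTop_nhds_zero_of_lt_one hl0 hl1).const_mul (d 0)
        exact (ht.eventually_lt_const (hdpos a)).exists
      have h3 : d a ≤ d 0 * l ^ (a + m * (b - a)) := (hdk m) ▸ hdgeo _
      have h4 : l ^ (a + m * (b - a)) ≤ l ^ m := by
        apply pow_le_pow_of_le_one hl0 hl1.le
        calc m = m * 1 := by omega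
          _ ≤ m * (b - a) := Nat.mul_le_mul_left m (by omega)
          _ ≤ a + m * (b - a) := by omega
      have h5 := mul_le_mul_of_nonneg_left h4 (hd0 0)
      linarith
    have hinj : Function.Injective u := by
      intro a b hab
      by_contra hne
      rcases lt_trichotomy a b with hc | hc | hc
      · exact hinjlt a b hc hab
      · exact hne hc
      · exact hinjlt b a hc hab.symm
    obtain ⟨M, hM⟩ := hbdd
    have hM1 : 1 ≤ M := le_trans (h.theta_ge_one u₀ u₀) (hM u₀ u₀)
    obtain ⟨j, hj⟩ : ∃ j, v = j + 1 := ⟨v - 1, by have := h.hv; omega⟩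
    set nu : ℝ := max α l with hnu_def
    have hnu0 : 0 < nu := lt_of_lt_of_le hlpos (le_max_right _ _)
    have hnu1 : nu < 1 := max_lt hα1 hl1
    have hανu : α ≤ nu := le_max_left _ _
    have hdnu : ∀ n, d n ≤ d 0 * nu ^ n := fun n =>
      le_trans (hdgeo n)
        (mul_le_mul_of_nonneg_left (pow_le_pow_left₀ hl0 (le_max_right _ _) n) (hd0 0))
    set sg : ℝ := Real.sqrt nu with hsg_def
    have hsg0 : 0 < sg := Real.sqrt_pos.mpr hnu0
    have hsg1 : sg < 1 := by
      have := Real.sqrt_lt_sqrt hnu0.le hnu1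
      simpa [Real.sqrt_one] using this
    have hsgsq : sg * sg = nu := Real.mul_self_sqrt hnu0.le
    have hnusg : nu ≤ sg := by nlinarith
    set c2 : ℝ := (β + γ) * d 0 with hc2_def
    have hc2 : 0 ≤ c2 := mul_nonneg (by linarith) (hd0 0)
    set K : ℝ := 1 / (1 - sg) with hK_def
    have hK0 : 0 ≤ K := le_of_lt (div_pos one_pos (by linarith))
    have hKb : ∀ n : ℕ, (n : ℝ) * sg ^ (n - 1) ≤ K := by
      intro n
      cases n with
      | zero => simpa using hK0
      | succ m =>
        simp only [Nat.succ_sub_one]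
        have h1 : ((m + 1 : ℕ) : ℝ) * sg ^ m = ∑ _i ∈ Finset.range (m + 1), sg ^ m := by
          simp [Finset.sum_const, Finset.card_range, nsmul_eq_mul]
        rw [h1]
        refine le_trans (Finset.sum_le_sum fun i hi => ?_) (geom_aux hsg0.le hsg1 (m + 1))
        exact pow_le_pow_of_le_one hsg0.le hsg1.le (by simpa using Nat.lt_succ_iff.mp (Finset.mem_range.mp hi))
    -- the shift lemma
    have hShift : ∀ p k, ρ (u k) (u (p + k)) ≤
        α ^ k * ρ (u 0) (u p) + c2 * ((k : ℝ) * nu ^ (k - 1)) := by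
      intro p k
      induction k with
      | zero => simp
      | succ m ih =>
        have h6 := hS (u m) (u (p + m))
        rw [← hu_succ m, ← hu_succ (p + m)] at h6
        have hdm : ρ (u m) (u (m + 1)) ≤ d 0 * nu ^ m := hdnu m
        have hdpm : ρ (u (p + m)) (u (p + m + 1)) ≤ d 0 * nu ^ m := by
          refine le_trans (hdnu (p + m)) ?_
          have h7 : nu ^ (p + m) ≤ nu ^ m := pow_le_pow_of_le_one hnu0.le hnu1.le (by omega)
          exact mul_le_mul_of_nonneg_left h7 (hd0 0)
        have hmono := mul_le_mul_of_nonneg_left ih hα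
        have hkey : α * ((m : ℝ) * nu ^ (m - 1)) + nu ^ m ≤ ((m : ℝ) + 1) * nu ^ m := by
          cases m with
          | zero => simp
          | succ k' =>
            simp only [Nat.succ_sub_one]
            push_cast
            have h7 : α * nu ^ k' ≤ nu ^ (k' + 1) := by
              rw [pow_succ]
              calc α * nu ^ k' ≤ nu * nu ^ k' :=
                    mul_le_mul_of_nonneg_right hανu (by positivity)
                _ = nu ^ k' * nu := mul_comm _ _
            have h8 := mul_le_mul_of_nonneg_left h7 (by positivity : (0:ℝ) ≤ (k' : ℝ) + 1)
            linarith [h8]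
        have h10 : α * (c2 * ((m : ℝ) * nu ^ (m - 1))) + c2 * nu ^ m ≤
            c2 * (((m : ℝ) + 1) * nu ^ m) := by
          have := mul_le_mul_of_nonneg_left hkey hc2
          linarith [this]
        calc ρ (u (m + 1)) (u (p + (m + 1)))
            = ρ (u (m + 1)) (u (p + m + 1)) := rfl
          _ ≤ α * ρ (u m) (u (p + m)) + β * (d 0 * nu ^ m) + γ * (d 0 * nu ^ m) := by
              have hb := mul_le_mul_of_nonneg_left hdm hβ
              have hg := mul_le_mul_of_nonneg_left hdpm hγ
              linarith [h6, hb, hg]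
          _ ≤ α * (α ^ m * ρ (u 0) (u p) + c2 * ((m : ℝ) * nu ^ (m - 1)))
              + c2 * nu ^ m := by
              have : β * (d 0 * nu ^ m) + γ * (d 0 * nu ^ m) = c2 * nu ^ m := by
                rw [hc2_def]; ring
              linarith [hmono]
          _ ≤ α ^ (m + 1) * ρ (u 0) (u p) + c2 * (((m + 1 : ℕ) : ℝ) * nu ^ ((m + 1) - 1)) := by
              simp only [Nat.succ_sub_one]
              push_cast
              have h12 : α * (α ^ m * ρ (u 0) (u p)) = α ^ (m + 1) * ρ (u 0) (u p) := by
                rw [pow_succ]; ring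
              linarith [h10, h12.le, h12.ge]
    -- the one–quad chain lemma
    have hQ1 : ∀ a q b, 1 ≤ q → a + q + j < b →
        ρ (u a) (u b) ≤ M * (ρ (u a) (u (a + q)) +
          (∑ i ∈ Finset.Icc 1 j, d (a + q + (i - 1))) + ρ (u (a + q + j)) (u b)) := by
      intro a q b hq hb
      have hcond : ∀ i ∈ Finset.Icc 1 v,
          (fun i => u (a + q + (i - 1))) i ≠ u a ∧ (fun i => u (a + q + (i - 1))) i ≠ u b := by
        intro i hi
        have hi' := Finset.mem_Icc.mp hi
        constructor
        · exact hinj.ne (by omega)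
        · exact hinj.ne (by omega)
      have hdist : ∀ i ∈ Finset.Icc 1 v, ∀ i' ∈ Finset.Icc 1 v, i ≠ i' →
          (fun i => u (a + q + (i - 1))) i ≠ (fun i => u (a + q + (i - 1))) i' := by
        intro i hi i' hi' hne
        have h1 := Finset.mem_Icc.mp hi
        have h2 := Finset.mem_Icc.mp hi'
        exact hinj.ne (by omega)
      have hquad := h.quad (u a) (u b) (fun i => u (a + q + (i - 1)))
        (hinj.ne (by omega)) hcond hdist
      have hsum_eq : ∑ i ∈ Finset.Icc 1 (v - 1), ρ (u (a + q + (i - 1))) (u (a + q + (i + 1 - 1)))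
          = ∑ i ∈ Finset.Icc 1 j, d (a + q + (i - 1)) := by
        rw [show v - 1 = j from by omega]
        refine Finset.sum_congr rfl fun i hi => ?_
        have hi1 : 1 ≤ i := (Finset.mem_Icc.mp hi).1
        rw [show a + q + (i + 1 - 1) = (a + q + (i - 1)) + 1 from by omega]
      rw [hsum_eq] at hquad
      rw [show (1:ℕ) - 1 = 0 from rfl, Nat.add_zero] at hquad
      rw [show v - 1 = j from by omega] at hquad
      refine le_trans hquad ?_
      refine mul_le_mul_of_nonneg_right (hM _ _) ?_
      have hsnn : 0 ≤ ∑ i ∈ Finset.Icc 1 j, d (a + q + (i - 1)) :=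
        Finset.sum_nonneg fun i _ => hd0 _
      have := hρnn (u a) (u (a + q))
      have := hρnn (u (a + q + j)) (u b)
      linarith
    -- choose the block length Q
    obtain ⟨Q, hQge1, hQhalf⟩ : ∃ Q, 1 ≤ Q ∧ M * sg ^ Q ≤ 1 / 2 := by
      have ht : Tendsto (fun k : ℕ => M * sg ^ k) atTop (𝓝 0) := by
        simpa using (tendsto_pow_atTop_nhds_zero_of_lt_one hsg0.le hsg1).const_mul M
      have hev := ht.eventually_lt_const (show (0:ℝ) < 1 / 2 by norm_num)
      obtain ⟨Q, hQ1', hQ2'⟩ := (hev.and (eventually_ge_atTop 1)).exists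
      exact ⟨Q, hQ2', hQ1'.le⟩
    set s : ℕ := Q + j with hs_def
    have hs1 : 1 ≤ s := by omega
    set BQ : ℝ := ∑ r ∈ Finset.range (s + 1), ρ (u 0) (u r) with hBQ_def
    have hBQ0 : 0 ≤ BQ := Finset.sum_nonneg fun _ _ => hρnn _ _
    have hBQmem : ∀ r, r ≤ s → ρ (u 0) (u r) ≤ BQ := by
      intro r hr
      exact Finset.single_le_sum (f := fun r => ρ (u 0) (u r))
        (fun _ _ => hρnn _ _) (Finset.mem_range.mpr (by omega))
    set w : ℕ → ℝ := fun a =>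
      nu ^ a * BQ + c2 * ((a : ℝ) * nu ^ (a - 1)) + (v : ℝ) * d 0 * nu ^ a with hw_def
    have hw0 : ∀ a, 0 ≤ w a := by
      intro a
      simp only [hw_def]
      have h1 : 0 ≤ nu ^ a * BQ := mul_nonneg (by positivity) hBQ0
      have h2 : 0 ≤ c2 * ((a : ℝ) * nu ^ (a - 1)) := mul_nonneg hc2 (by positivity)
      have h3 : 0 ≤ (v : ℝ) * d 0 * nu ^ a :=
        mul_nonneg (mul_nonneg (by positivity) (hd0 0)) (by positivity)
      linarith
    -- terminal segment bound
    have hterm : ∀ a p, a < p → p ≤ a + s → ρ (u a) (u p) ≤ w a := by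
      intro a p hap hps
      rw [show p = (p - a) + a from by omega]
      refine le_trans (hShift (p - a) a) ?_
      have h1 : ρ (u 0) (u (p - a)) ≤ BQ := hBQmem _ (by omega)
      have h2 : α ^ a ≤ nu ^ a := pow_le_pow_left₀ hα hανu a
      have h3 := mul_le_mul h2 h1 (hρnn _ _) (pow_nonneg hnu0.le a)
      simp only [hw_def]
      have h4 : 0 ≤ (v : ℝ) * d 0 * nu ^ a :=
        mul_nonneg (mul_nonneg (by positivity) (hd0 0)) (by positivity)
      linarith
    -- the unrolled block estimate
    have hmain : ∀ n a p, a < p → p ≤ a + (n + 1) * s →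
        ρ (u a) (u p) ≤ ∑ i ∈ Finset.range (n + 1), M ^ (i + 1) * w (a + i * s) := by
      intro n
      induction n with
      | zero =>
        intro a p h1 h2
        have h3 := le_trans (hterm a p h1 (by omega)) (le_mul_of_one_le_left (hw0 a) hM1)
        simpa using h3
      | succ m ih =>
        intro a p h1 h2
        by_cases hsp : p ≤ a + s
        · have h0 : ρ (u a) (u p) ≤ M ^ (0 + 1) * w (a + 0 * s) := by
            simpa using le_trans (hterm a p h1 hsp) (le_mul_of_one_le_left (hw0 a) hM1)
          refine le_trans h0 ?_
          refine Finset.single_le_sum (f := fun i => M ^ (i + 1) * w (a + i * s))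
            (fun i _ => mul_nonneg (pow_nonneg (by linarith) _) (hw0 _)) ?_
          exact Finset.mem_range.mpr (by omega)
        · push_neg at hsp
          have hb3 : a + Q + j = a + s := by omega
          have hq := hQ1 a Q p hQge1 (by omega)
          rw [hb3] at hq
          have hb1 : ρ (u a) (u (a + Q)) ≤ nu ^ a * BQ + c2 * ((a : ℝ) * nu ^ (a - 1)) := by
            have hsh := hShift Q a
            rw [show Q + a = a + Q from by omega] at hsh
            refine le_trans hsh ?_
            have hα_nu : α ^ a ≤ nu ^ a := pow_le_pow_left₀ hα hανu a
            have hBQQ : ρ (u 0) (u Q) ≤ BQ := hBQmem Q (by omega)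
            have := mul_le_mul hα_nu hBQQ (hρnn _ _) (pow_nonneg hnu0.le a)
            linarith
          have hb2 : ∑ i ∈ Finset.Icc 1 j, d (a + Q + (i - 1)) ≤ (v : ℝ) * d 0 * nu ^ a := by
            have hstep : ∀ i ∈ Finset.Icc 1 j, d (a + Q + (i - 1)) ≤ d 0 * nu ^ a := by
              intro i hi
              refine le_trans (hdnu _) ?_
              have h5 : nu ^ (a + Q + (i - 1)) ≤ nu ^ a :=
                pow_le_pow_of_le_one hnu0.le hnu1.le (by omega)
              exact mul_le_mul_of_nonneg_left h5 (hd0 0)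
            refine le_trans (Finset.sum_le_card_nsmul _ _ _ hstep) ?_
            rw [Nat.card_Icc]
            simp only [nsmul_eq_mul]
            have h6 : ((j + 1 - 1 : ℕ) : ℝ) ≤ (v : ℝ) := by
              exact_mod_cast (by omega : j + 1 - 1 ≤ v)
            have h7 := mul_le_mul_of_nonneg_right h6 (mul_nonneg (hd0 0) (pow_nonneg hnu0.le a))
            calc ((j + 1 - 1 : ℕ) : ℝ) * (d 0 * nu ^ a) ≤ (v : ℝ) * (d 0 * nu ^ a) := h7
              _ = (v : ℝ) * d 0 * nu ^ a := by ring
          have hrec := ih (a + s) p (by omega) (by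
            have h7 : a + (m + 1 + 1) * s = (a + s) + (m + 1) * s := by ring
            omega)
          calc ρ (u a) (u p)
              ≤ M * (ρ (u a) (u (a + Q)) + (∑ i ∈ Finset.Icc 1 j, d (a + Q + (i - 1)))
                + ρ (u (a + s)) (u p)) := hq
            _ ≤ M * (w a + ∑ i ∈ Finset.range (m + 1), M ^ (i + 1) * w ((a + s) + i * s)) := by
                refine mul_le_mul_of_nonneg_left ?_ (by linarith)
                have hw_a : ρ (u a) (u (a + Q)) +
                    (∑ i ∈ Finset.Icc 1 j, d (a + Q + (i - 1))) ≤ w a := by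
                  simp only [hw_def]
                  linarith
                linarith [hrec]
            _ = ∑ i ∈ Finset.range (m + 1 + 1), M ^ (i + 1) * w (a + i * s) := by
                rw [Finset.sum_range_succ' (fun i => M ^ (i + 1) * w (a + i * s)) (m + 1)]
                have he : ∀ i, M ^ (i + 1 + 1) * w (a + (i + 1) * s)
                    = M * (M ^ (i + 1) * w ((a + s) + i * s)) := by
                  intro i
                  rw [show a + (i + 1) * s = (a + s) + i * s from by ring]
                  ring
                rw [Finset.sum_congr rfl fun i _ => he i, ← Finset.mul_sum]
                simp only [pow_one, Nat.zero_mul, Nat.add_zero]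
                ring
    -- global boundedness of the orbit
    set W : ℝ := BQ + c2 * K / sg + (v : ℝ) * d 0 with hW_def
    have hW0 : 0 ≤ W := by
      have h1 : 0 ≤ c2 * K / sg := by positivity
      have h2 : 0 ≤ (v : ℝ) * d 0 := mul_nonneg (by positivity) (hd0 0)
      simp only [hW_def]
      linarith
    have hwW : ∀ a, w a ≤ W * sg ^ a := by
      intro a
      have hnpow : ∀ b : ℕ, nu ^ b = sg ^ b * sg ^ b := by
        intro b
        rw [← hsgsq, mul_pow]
      have h1 : nu ^ a * BQ ≤ sg ^ a * BQ := by
        refine mul_le_mul_of_nonneg_right ?_ hBQ0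
        rw [hnpow a]
        exact mul_le_of_le_one_left (pow_nonneg hsg0.le a) (pow_le_one₀ hsg0.le hsg1.le)
      have h2 : c2 * ((a : ℝ) * nu ^ (a - 1)) ≤ c2 * K / sg * sg ^ a := by
        have h3 : (a : ℝ) * nu ^ (a - 1) ≤ K * sg ^ (a - 1) := by
          rw [hnpow (a - 1)]
          have := mul_le_mul_of_nonneg_right (hKb a) (pow_nonneg hsg0.le (a - 1))
          linarith [this]
        have h4 : sg ^ (a - 1) ≤ sg ^ a / sg := by
          cases a with
          | zero =>
            simp only [Nat.zero_sub, pow_zero]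
            rw [le_div_iff₀ hsg0]
            nlinarith
          | succ k =>
            simp only [Nat.succ_sub_one]
            rw [le_div_iff₀ hsg0, pow_succ]
        calc c2 * ((a : ℝ) * nu ^ (a - 1)) ≤ c2 * (K * sg ^ (a - 1)) :=
              mul_le_mul_of_nonneg_left h3 hc2
          _ ≤ c2 * (K * (sg ^ a / sg)) := by
              refine mul_le_mul_of_nonneg_left ?_ hc2
              exact mul_le_mul_of_nonneg_left h4 hK0
          _ = c2 * K / sg * sg ^ a := by field_simp
      have h3 : (v : ℝ) * d 0 * nu ^ a ≤ (v : ℝ) * d 0 * sg ^ a := by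
        refine mul_le_mul_of_nonneg_left ?_ (mul_nonneg (by positivity) (hd0 0))
        rw [hnpow a]
        exact mul_le_of_le_one_left (pow_nonneg hsg0.le a) (pow_le_one₀ hsg0.le hsg1.le)
      simp only [hw_def, hW_def]
      have hexp : (BQ + c2 * K / sg + (v : ℝ) * d 0) * sg ^ a
          = sg ^ a * BQ + c2 * K / sg * sg ^ a + (v : ℝ) * d 0 * sg ^ a := by ring
      linarith [h1, h2, h3, hexp.le, hexp.ge]
    have hMs : M * sg ^ s ≤ 1 / 2 := by
      have h1 : sg ^ s = sg ^ Q * sg ^ j := by rw [hs_def, pow_add]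
      have h2 : sg ^ j ≤ 1 := pow_le_one₀ hsg0.le hsg1.le
      have h3 : sg ^ s ≤ sg ^ Q := by
        rw [h1]
        exact mul_le_of_le_one_right (pow_nonneg hsg0.le Q) h2
      have h4 := mul_le_mul_of_nonneg_left h3 (by linarith : (0:ℝ) ≤ M)
      linarith
    have hBound : ∀ p, 0 < p → ρ (u 0) (u p) ≤ 2 * (M * W) := by
      intro p hp
      have hps : p ≤ 0 + (p + 1) * s := by
        have := Nat.mul_le_mul_left (p + 1) hs1
        omega
      have h1 := hmain p 0 p hp hps
      refine le_trans h1 ?_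
      have h2 : ∀ i ∈ Finset.range (p + 1),
          M ^ (i + 1) * w (0 + i * s) ≤ (M * W) * (1 / 2) ^ i := by
        intro i _
        have h3 : w (0 + i * s) ≤ W * sg ^ (i * s) := by
          simpa using hwW (i * s)
        have h4 : M ^ (i + 1) * w (0 + i * s) ≤ M ^ (i + 1) * (W * sg ^ (i * s)) := by
          refine mul_le_mul_of_nonneg_left h3 (pow_nonneg (by linarith) _)
        refine le_trans h4 ?_
        have h5 : sg ^ (i * s) = (sg ^ s) ^ i := by
          rw [show i * s = s * i from Nat.mul_comm i s, pow_mul]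
        have h6 : M ^ (i + 1) * (W * sg ^ (i * s)) = (M * W) * (M * sg ^ s) ^ i := by
          rw [h5, mul_pow]
          ring
        rw [h6]
        refine mul_le_mul_of_nonneg_left ?_ (mul_nonneg (by linarith) hW0)
        exact pow_le_pow_left₀ (by positivity) hMs i
      refine le_trans (Finset.sum_le_sum h2) ?_
      rw [← Finset.mul_sum]
      have h7 := geom_aux (by norm_num : (0:ℝ) ≤ 1/2) (by norm_num) (p + 1)
      have h8 : (1 : ℝ) / (1 - 1/2) = 2 := by norm_num
      rw [h8] at h7
      have h9 := mul_le_mul_of_nonneg_left h7 (mul_nonneg (by linarith : (0:ℝ) ≤ M) hW0)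
      linarith
    -- the Cauchy estimate
    set G : ℝ := 2 * (M * W) + c2 * K with hG_def
    have hG0 : 0 ≤ G := by
      have h1 : 0 ≤ 2 * (M * W) := by
        have := mul_nonneg (le_trans zero_le_one hM1) hW0
        linarith
      have h2 : 0 ≤ c2 * K := mul_nonneg hc2 hK0
      simp only [hG_def]; linarith
    have hGest : ∀ n p, 1 ≤ n → 0 < p → ρ (u n) (u (n + p)) ≤ G * sg ^ (n - 1) := by
      intro n p hn hp
      rw [show n + p = p + n from Nat.add_comm n p]
      refine le_trans (hShift p n) ?_
      have e1 : α ^ n * ρ (u 0) (u p) ≤ sg ^ (n - 1) * (2 * (M * W)) := by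
        have hα_sg : α ^ n ≤ sg ^ (n - 1) := by
          calc α ^ n ≤ sg ^ n := pow_le_pow_left₀ hα (le_trans hανu hnusg) n
            _ ≤ sg ^ (n - 1) := pow_le_pow_of_le_one hsg0.le hsg1.le (by omega)
        have h2 : 0 ≤ ρ (u 0) (u p) := hρnn _ _
        have h3 := hBound p hp
        have := mul_le_mul hα_sg h3 h2 (by positivity)
        linarith
      have e2 : c2 * ((n : ℝ) * nu ^ (n - 1)) ≤ c2 * K * sg ^ (n - 1) := by
        have hnpow : nu ^ (n - 1) = sg ^ (n - 1) * sg ^ (n - 1) := by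
          rw [← hsgsq, mul_pow]
        have h3 : (n : ℝ) * nu ^ (n - 1) ≤ K * sg ^ (n - 1) := by
          rw [hnpow]
          have := mul_le_mul_of_nonneg_right (hKb n) (pow_nonneg hsg0.le (n - 1))
          linarith [this]
        have := mul_le_mul_of_nonneg_left h3 hc2
        linarith [this]
      simp only [hG_def]
      have hexp : (2 * (M * W) + c2 * K) * sg ^ (n - 1)
          = sg ^ (n - 1) * (2 * (M * W)) + c2 * K * sg ^ (n - 1) := by ring
      linarith [e1, e2, hexp.le, hexp.ge]
    have hCauchy : ThetaCauchy ρ u := by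
      intro ε hε
      have hev : ∀ᶠ k in atTop, (G + 1) * sg ^ k < ε := by
        have ht : Tendsto (fun k : ℕ => (G + 1) * sg ^ k) atTop (𝓝 0) := by
          simpa using (tendsto_pow_atTop_nhds_zero_of_lt_one hsg0.le hsg1).const_mul (G + 1)
        exact ht.eventually_lt_const hε
      obtain ⟨n₀, hn₀⟩ := eventually_atTop.mp hev
      refine ⟨n₀ + 1, fun n hn p hp => ?_⟩
      calc ρ (u n) (u (n + p)) ≤ G * sg ^ (n - 1) := hGest n p (by omega) hp
        _ ≤ (G + 1) * sg ^ (n - 1) := by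
            refine mul_le_mul_of_nonneg_right (by linarith) (by positivity)
        _ < ε := hn₀ (n - 1) (by omega)
    obtain ⟨x, htendx⟩ := hcomp u hCauchy
    -- limit tendsto helpers
    have hdten : Tendsto d atTop (𝓝 0) := by
      apply squeeze_zero hd0 hdnu
      simpa using (tendsto_pow_atTop_nhds_zero_of_lt_one hnu0.le hnu1).const_mul (d 0)
    have hushift : ∀ k : ℕ, Tendsto (fun n => ρ (u (n + k)) x) atTop (𝓝 0) := by
      intro k
      exact htendx.comp (tendsto_add_atTop_nat k)
    have hdshift : ∀ k : ℕ, Tendsto (fun n => d (n + k)) atTop (𝓝 0) := by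
      intro k
      exact hdten.comp (tendsto_add_atTop_nat k)
    have hsumten : Tendsto (fun n => ∑ i ∈ Finset.Icc 1 j, d (n + i)) atTop (𝓝 0) := by
      have := tendsto_finset_sum (Finset.Icc 1 j) (fun i (_ : i ∈ Finset.Icc 1 j) => hdshift i)
      simpa using this
    -- the limit is a fixed point
    have hfix : S x = x := by
      by_contra hne
      have hxS : x ≠ S x := fun hh => hne hh.symm
      have hr0 : 0 < ρ x (S x) := by
        rcases eq_or_lt_of_le (hρnn x (S x)) with h0 | h0
        · exact absurd ((hzero _ _).mp h0.symm) hxS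
        · exact h0
      have hgx : ∃ N, ∀ m, N ≤ m → u m ≠ x := by
        by_cases hex : ∃ m, u m = x
        · obtain ⟨m1, hm1⟩ := hex
          exact ⟨m1 + 1, fun m hm he => by have := hinj (he.trans hm1.symm); omega⟩
        · exact ⟨0, fun m _ he => hex ⟨m, he⟩⟩
      have hgs : ∃ N, ∀ m, N ≤ m → u m ≠ S x := by
        by_cases hex : ∃ m, u m = S x
        · obtain ⟨m1, hm1⟩ := hex
          exact ⟨m1 + 1, fun m hm he => by have := hinj (he.trans hm1.symm); omega⟩
        · exact ⟨0, fun m _ he => hex ⟨m, he⟩⟩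
      obtain ⟨N1, hN1⟩ := hgx
      obtain ⟨N2, hN2⟩ := hgs
      have hbddT : BddAbove ((Set.range fun u => θ u (S u)) ∪ (Set.range fun u => θ (S u) u)) := by
        refine ⟨M, ?_⟩
        rintro y (⟨u', rfl⟩ | ⟨u', rfl⟩) <;> exact hM _ _
      set Θ : ℝ := sSup ((Set.range fun u => θ u (S u)) ∪ (Set.range fun u => θ (S u) u))
        with hΘ_def
      have ht1 : θ x (S x) ≤ Θ := le_csSup hbddT (Or.inl ⟨x, rfl⟩)
      have ht2 : θ (S x) x ≤ Θ := le_csSup hbddT (Or.inr ⟨x, rfl⟩)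
      have hΘ1 : (1:ℝ) ≤ Θ := le_trans (h.theta_ge_one x (S x)) ht1
      have hΘ0 : (0:ℝ) < Θ := by linarith
      have hminΘ : min β γ * Θ < 1 := (lt_div_iff₀ hΘ0).mp hΓ
      rcases le_total γ β with hγβ | hβγ
      · -- min = γ ; use quad at (x, Sx)
        have hγΘ : γ * Θ < 1 := by
          rw [min_eq_right hγβ] at hminΘ; exact hminΘ
        have ht0 : (0:ℝ) < θ x (S x) := by linarith [h.theta_ge_one x (S x)]
        have htγ : θ x (S x) * γ < 1 := by
          have := mul_le_mul_of_nonneg_right ht1 hγ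
          linarith
        set r : ℝ := ρ x (S x) with hr_def
        set δ : ℝ := (1 - θ x (S x) * γ) * r / (8 * Θ) with hδ_def
        have hδ0 : 0 < δ := by
          apply div_pos
          · exact mul_pos (by linarith) hr0
          · linarith
        have e1 : ∀ᶠ n in atTop, ρ (u (n + 1)) x < δ := (hushift 1).eventually_lt_const hδ0
        have e2 : ∀ᶠ n in atTop, (∑ i ∈ Finset.Icc 1 j, d (n + i)) < δ :=
          hsumten.eventually_lt_const hδ0
        have e3 : ∀ᶠ n in atTop, ρ (u (n + j)) x < δ := (hushift j).eventually_lt_const hδ0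
        have e4 : ∀ᶠ n in atTop, d (n + j) < δ := (hdshift j).eventually_lt_const hδ0
        have e5 : ∀ᶠ n in atTop, N1 + N2 ≤ n := eventually_ge_atTop _
        obtain ⟨n, h1, h2, h3, h4, h5⟩ := (e1.and (e2.and (e3.and (e4.and e5)))).exists
        have hquad := h.quad x (S x) (fun i => u (n + i)) hxS
          (by
            intro i hi
            have hi' := Finset.mem_Icc.mp hi
            exact ⟨hN1 _ (by omega), hN2 _ (by omega)⟩)
          (by
            intro i hi i' hi' hne'
            exact hinj.ne (by omega))
        have hsum_eq : ∑ i ∈ Finset.Icc 1 (v - 1), ρ (u (n + i)) (u (n + (i + 1)))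
            = ∑ i ∈ Finset.Icc 1 j, d (n + i) := by
          rw [show v - 1 = j from by omega]
          exact Finset.sum_congr rfl fun i _ => rfl
        rw [hsum_eq] at hquad
        have hlast : ρ (u (n + v)) (S x) ≤ α * ρ (u (n + j)) x + β * d (n + j) + γ * r := by
          have h6 := hS (u (n + j)) x
          rw [← hu_succ (n + j)] at h6
          rw [show n + v = n + j + 1 from by omega]
          exact h6
        have hq2 : r ≤ θ x (S x) * ((ρ (u (n + 1)) x) + (∑ i ∈ Finset.Icc 1 j, d (n + i))
            + (α * ρ (u (n + j)) x + β * d (n + j) + γ * r)) := by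
          refine le_trans hquad (mul_le_mul_of_nonneg_left ?_ ht0.le)
          have hsym1 : ρ x (u (n + 1)) = ρ (u (n + 1)) x := hsym _ _
          linarith [hlast, hsym1.le, hsym1.ge]
        have hX0 : 0 ≤ (ρ (u (n + 1)) x) + (∑ i ∈ Finset.Icc 1 j, d (n + i))
            + (α * ρ (u (n + j)) x + β * d (n + j)) := by
          have s1 := hρnn (u (n + 1)) x
          have s2 : 0 ≤ ∑ i ∈ Finset.Icc 1 j, d (n + i) :=
            Finset.sum_nonneg fun i _ => hd0 _
          have s3 := mul_nonneg hα (hρnn (u (n + j)) x)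
          have s4 := mul_nonneg hβ (hd0 (n + j))
          linarith
        have hXδ : (ρ (u (n + 1)) x) + (∑ i ∈ Finset.Icc 1 j, d (n + i))
            + (α * ρ (u (n + j)) x + β * d (n + j)) < 4 * δ := by
          have l1 := mul_le_mul_of_nonneg_right hα1.le (hρnn (u (n + j)) x)
          have l2 := mul_le_mul_of_nonneg_right hβ1 (hd0 (n + j))
          linarith [l1, l2]
        have hq3 : r * (1 - θ x (S x) * γ) ≤ Θ * (4 * δ) := by
          have htX := mul_le_mul_of_nonneg_right ht1 hX0
          have hΘδ := mul_lt_mul_of_pos_left hXδ hΘ0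
          linarith [hq2, htX, hΘδ]
        have hcalc : Θ * (4 * δ) = (1 - θ x (S x) * γ) * r / 2 := by
          rw [hδ_def]
          field_simp
          ring
        have hpos : 0 < (1 - θ x (S x) * γ) * r := mul_pos (by linarith) hr0
        rw [hcalc] at hq3
        linarith [hq3, hpos]
      · -- min = β ; use quad at (Sx, x)
        have hβΘ : β * Θ < 1 := by
          rw [min_eq_left hβγ] at hminΘ; exact hminΘ
        have ht0 : (0:ℝ) < θ (S x) x := by linarith [h.theta_ge_one (S x) x]
        have htβ : θ (S x) x * β < 1 := by
          have := mul_le_mul_of_nonneg_right ht2 hβ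
          linarith
        set r : ℝ := ρ x (S x) with hr_def
        set δ : ℝ := (1 - θ (S x) x * β) * r / (8 * Θ) with hδ_def
        have hδ0 : 0 < δ := by
          apply div_pos
          · exact mul_pos (by linarith) hr0
          · linarith
        have e1 : ∀ᶠ n in atTop, ρ (u n) x < δ := htendx.eventually_lt_const hδ0
        have e2 : ∀ᶠ n in atTop, (∑ i ∈ Finset.Icc 1 j, d (n + i)) < δ :=
          hsumten.eventually_lt_const hδ0
        have e3 : ∀ᶠ n in atTop, ρ (u (n + v)) x < δ := (hushift v).eventually_lt_const hδ0
        have e4 : ∀ᶠ n in atTop, d n < δ := hdten.eventually_lt_const hδ0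
        have e5 : ∀ᶠ n in atTop, N1 + N2 ≤ n := eventually_ge_atTop _
        obtain ⟨n, h1, h2, h3, h4, h5⟩ := (e1.and (e2.and (e3.and (e4.and e5)))).exists
        have hquad := h.quad (S x) x (fun i => u (n + i)) (fun hh => hne hh)
          (by
            intro i hi
            have hi' := Finset.mem_Icc.mp hi
            exact ⟨hN2 _ (by omega), hN1 _ (by omega)⟩)
          (by
            intro i hi i' hi' hne'
            exact hinj.ne (by omega))
        have hsum_eq : ∑ i ∈ Finset.Icc 1 (v - 1), ρ (u (n + i)) (u (n + (i + 1)))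
            = ∑ i ∈ Finset.Icc 1 j, d (n + i) := by
          rw [show v - 1 = j from by omega]
          exact Finset.sum_congr rfl fun i _ => rfl
        rw [hsum_eq] at hquad
        have hfirst : ρ (S x) (u (n + 1)) ≤ α * ρ x (u n) + β * r + γ * d n := by
          have h6 := hS x (u n)
          rw [← hu_succ n] at h6
          exact h6
        have hsymr : ρ (S x) x = r := hsym _ _
        have hsymn : ρ x (u n) = ρ (u n) x := hsym _ _
        have hq2 : r ≤ θ (S x) x * ((α * ρ (u n) x + β * r + γ * d n)
            + (∑ i ∈ Finset.Icc 1 j, d (n + i)) + ρ (u (n + v)) x) := by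
          rw [← hsymr]
          refine le_trans hquad (mul_le_mul_of_nonneg_left ?_ ht0.le)
          rw [hsymn] at hfirst
          have hsymr2 : β * ρ (S x) x = β * r := by rw [hsymr]
          linarith [hfirst, hsymr2.le, hsymr2.ge]
        have hX0 : 0 ≤ (α * ρ (u n) x + γ * d n)
            + (∑ i ∈ Finset.Icc 1 j, d (n + i)) + ρ (u (n + v)) x := by
          have s1 := mul_nonneg hα (hρnn (u n) x)
          have s2 : 0 ≤ ∑ i ∈ Finset.Icc 1 j, d (n + i) :=
            Finset.sum_nonneg fun i _ => hd0 _
          have s3 := mul_nonneg hγ (hd0 n)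
          have s4 := hρnn (u (n + v)) x
          linarith
        have hXδ : (α * ρ (u n) x + γ * d n)
            + (∑ i ∈ Finset.Icc 1 j, d (n + i)) + ρ (u (n + v)) x < 4 * δ := by
          have l1 := mul_le_mul_of_nonneg_right hα1.le (hρnn (u n) x)
          have l2 := mul_le_mul_of_nonneg_right hγ1.le (hd0 n)
          linarith [l1, l2]
        have hq3 : r * (1 - θ (S x) x * β) ≤ Θ * (4 * δ) := by
          have hq2' : r ≤ θ (S x) x * ((α * ρ (u n) x + γ * d n)
              + (∑ i ∈ Finset.Icc 1 j, d (n + i)) + ρ (u (n + v)) x)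
              + (θ (S x) x * β) * r := by
            linarith [hq2]
          have htX := mul_le_mul_of_nonneg_right ht2 hX0
          have hΘδ := mul_lt_mul_of_pos_left hXδ hΘ0
          linarith [hq2', htX, hΘδ]
        have hcalc : Θ * (4 * δ) = (1 - θ (S x) x * β) * r / 2 := by
          rw [hδ_def]
          field_simp
          ring
        have hpos : 0 < (1 - θ (S x) x * β) * r := mul_pos (by linarith) hr0
        rw [hcalc] at hq3
        linarith [hq3, hpos]
    exact ⟨x, hfix, htendx⟩

/-- Reich fixed point theorem in complete b_v(θ) metric spaces. -/
theorem stmt_14 {E : Type*} (ρ θ : E → E → ℝ) (v : ℕ)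
    (h : IsBvTheta E ρ θ v) (hcomp : ThetaComplete ρ)
    (hbdd : ∃ M : ℝ, ∀ u w, θ u w ≤ M)
    (S : E → E) (α β γ : ℝ) (hα : 0 ≤ α) (hβ : 0 ≤ β) (hγ : 0 ≤ γ)
    (hsum : α + β + γ < 1)
    (hΓ : min β γ <
      1 / sSup ((Set.range fun u => θ u (S u)) ∪ (Set.range fun u => θ (S u) u)))
    (hS : ∀ u w, ρ (S u) (S w) ≤ α * ρ u w + β * ρ u (S u) + γ * ρ w (S w)) :
    ∃ b : E, S b = b ∧ (∀ a : E, S a = a → a = b) ∧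
      ∀ u₀ : E, Tendsto (fun n => ρ (S^[n] u₀) b) atTop (𝓝 0) := by
  rcases isEmpty_or_nonempty E with hE | hE
  · exfalso
    have h1 : (Set.range fun u : E => θ u (S u)) = ∅ := Set.range_eq_empty _
    have h2 : (Set.range fun u : E => θ (S u) u) = ∅ := Set.range_eq_empty _
    rw [h1, h2] at hΓ
    simp only [Set.empty_union, Real.sSup_empty] at hΓ
    have h3 : (0:ℝ) ≤ min β γ := le_min hβ hγ
    rw [div_zero] at hΓ
    linarith
  · have huniq : ∀ a b : E, S a = a → S b = b → a = b := by
      intro a b ha hb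
      have h1 := hS a b
      rw [ha, hb] at h1
      have h2 : ρ a a = 0 := (h.zero_iff a a).mpr rfl
      have h3 : ρ b b = 0 := (h.zero_iff b b).mpr rfl
      have h4 : ρ a b = 0 := by nlinarith [h.nonneg a b]
      exact (h.zero_iff a b).mp h4
    obtain ⟨b, hb, hbt⟩ := exists_fix ρ θ v h hcomp hbdd S α β γ hα hβ hγ hsum hΓ hS
      (Classical.arbitrary E)
    refine ⟨b, hb, fun a ha => huniq a b ha hb, fun u₀ => ?_⟩
    obtain ⟨x, hx, hxt⟩ := exists_fix ρ θ v h hcomp hbdd S α β γ hα hβ hγ hsum hΓ hS u₀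
    rwa [huniq x b hx hb] at hxt
end

section
/- Let (E, ρ_θ) be a complete b_v(θ) metric space with θ bounded, and S : E → E a mapping satisfying ρ_θ(Su, Sw) ≤ β ρ_θ(u,Su) + γ ρ_θ(w,Sw) for all u, w ∈ E, where β, γ ≥ 0, β + γ < 1, and min{β, γ} < 1 / sup{θ(u,Su), θ(Su,u) : u ∈ E}. Then S has a unique fixed point. -/
/-!
Kannan's argument: along an orbit `uₙ = Sⁿ a` the Kannan inequality gives
`ρ(uₙ₊₁, uₙ₊₂) ≤ λ ρ(uₙ, uₙ₊₁)` with `λ = β / (1 - γ) < 1`, and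
`ρ(uₘ₊₁, uₘ₊₁₊ₚ) ≤ β ρ(uₘ, uₘ₊₁) + γ ρ(uₘ₊ₚ, uₘ₊ₚ₊₁) ≤ (β + γ) λᵐ ρ(a, Sa)`, so the orbit is Cauchy
and has a limit `x`. Unless the orbit meets a fixed point it is injective, so the `v` points
`uₙ₊₁, …, uₙ₊ᵥ` are admissible intermediate points of the `b_v(θ)` inequality between `x` and `Sx`.
Putting `Sx` next to `uₙ₊₁ = S uₙ` (or next to `uₙ₊ᵥ = S uₙ₊ᵥ₋₁`) and letting `n → ∞` leaves
`ρ(x, Sx) ≤ θ β ρ(x, Sx)` (or `≤ θ γ ρ(x, Sx)`), with `θ` evaluated at the pair `(Sx, x)`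
(or `(x, Sx)`); the hypothesis on `min β γ` makes one of these factors `< 1`.
-/

open Filter Topology Function Finset

def IsKannan {E : Type*} (ρ : E → E → ℝ) (S : E → E) (β γ : ℝ) : Prop :=
  ∀ u w, ρ (S u) (S w) ≤ β * ρ u (S u) + γ * ρ w (S w)

section Kannan

variable {E : Type*} {ρ : E → E → ℝ} {S : E → E} {β γ : ℝ}

theorem eq_of_isFixedPt_of_kannan (hρ0 : ∀ u w, 0 ≤ ρ u w) (hρ : ∀ u w, ρ u w = 0 ↔ u = w)
    (hS : IsKannan ρ S β γ) {x y : E} (hx : IsFixedPt S x) (hy : IsFixedPt S y) : x = y := by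
  have hxy := hS x y
  rw [hx, hy, (hρ x x).2 rfl, (hρ y y).2 rfl] at hxy
  exact (hρ x y).1 (le_antisymm (by linarith) (hρ0 x y))

theorem kannan_dist_iterate_succ_le (hS : IsKannan ρ S β γ) (hγ : γ < 1) (a : E) (n : ℕ) :
    ρ (S^[n + 1] a) (S^[n + 1 + 1] a) ≤ β / (1 - γ) * ρ (S^[n] a) (S^[n + 1] a) := by
  have h := hS (S^[n] a) (S^[n + 1] a)
  rw [← iterate_succ_apply' S n, ← iterate_succ_apply' S (n + 1)] at h
  rw [div_mul_eq_mul_div, le_div_iff₀ (by linarith)]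
  linarith

theorem kannan_dist_iterate_le (hS : IsKannan ρ S β γ) (hβ : 0 ≤ β) (hγ : γ < 1) (a : E)
    (n : ℕ) :
    ρ (S^[n] a) (S^[n + 1] a) ≤ (β / (1 - γ)) ^ n * ρ a (S a) :=
  le_geom (u := fun n => ρ (S^[n] a) (S^[n + 1] a)) (div_nonneg hβ (by linarith)) n
    fun k _ => kannan_dist_iterate_succ_le hS hγ a k

theorem tendsto_kannan_dist_iterate (hρ0 : ∀ u w, 0 ≤ ρ u w) (hS : IsKannan ρ S β γ)
    (hβ : 0 ≤ β) (hsum : β + γ < 1) (a : E) :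
    Tendsto (fun n => ρ (S^[n] a) (S^[n + 1] a)) atTop (𝓝 0) := by
  have hgeom : Tendsto (fun n => (β / (1 - γ)) ^ n * ρ a (S a)) atTop (𝓝 0) := by
    simpa using (tendsto_pow_atTop_nhds_zero_of_lt_one (div_nonneg hβ (by linarith))
      ((div_lt_one (by linarith)).2 (by linarith))).mul_const (ρ a (S a))
  exact squeeze_zero (fun n => hρ0 _ _) (kannan_dist_iterate_le hS hβ (by linarith) a) hgeom

theorem thetaCauchy_of_le_of_tendsto {u : ℕ → E} {b : ℕ → ℝ} (hb : Tendsto b atTop (𝓝 0))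
    (hle : ∀ n p, ρ (u (n + 1)) (u (n + 1 + p)) ≤ b n) : ThetaCauchy ρ u := by
  intro ε hε
  obtain ⟨N, hN⟩ := eventually_atTop.1 ((tendsto_order.1 hb).2 ε hε)
  refine ⟨N + 1, fun n hn p _ => ?_⟩
  obtain ⟨m, rfl⟩ : ∃ m, n = m + 1 := ⟨n - 1, by omega⟩
  exact (hle m p).trans_lt (hN m (by omega))

theorem thetaCauchy_iterate_of_kannan (hρ0 : ∀ u w, 0 ≤ ρ u w) (hS : IsKannan ρ S β γ)
    (hβ : 0 ≤ β) (hγ : 0 ≤ γ) (hsum : β + γ < 1) (a : E) :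
    ThetaCauchy ρ (fun n => S^[n] a) := by
  set r := β / (1 - γ)
  have hr0 : 0 ≤ r := div_nonneg hβ (by linarith)
  have hr1 : r < 1 := (div_lt_one (by linarith)).2 (by linarith)
  refine thetaCauchy_of_le_of_tendsto (b := fun m => (β + γ) * (r ^ m * ρ a (S a)))
    (by simpa using ((tendsto_pow_atTop_nhds_zero_of_lt_one hr0 hr1).mul_const
      (ρ a (S a))).const_mul (β + γ)) fun m p => ?_
  have h := hS (S^[m] a) (S^[m + p] a)
  rw [← iterate_succ_apply' S m, ← iterate_succ_apply' S (m + p)] at h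
  have hm := kannan_dist_iterate_le hS hβ (by linarith) a m
  have hmp : ρ (S^[m + p] a) (S^[m + p + 1] a) ≤ r ^ m * ρ a (S a) :=
    (kannan_dist_iterate_le hS hβ (by linarith) a (m + p)).trans
      (mul_le_mul_of_nonneg_right (pow_le_pow_of_le_one hr0 hr1.le (by omega)) (hρ0 _ _))
  rw [show m + 1 + p = m + p + 1 by omega]
  nlinarith

theorem kannan_exists_isFixedPt_iterate_or_injective (hρ : ∀ u w, ρ u w = 0 ↔ u = w)
    (hρ0 : ∀ u w, 0 ≤ ρ u w) (hS : IsKannan ρ S β γ)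
    (hβ : 0 ≤ β) (hsum : β + γ < 1) (a : E) :
    (∃ n, IsFixedPt S (S^[n] a)) ∨ Injective fun n => S^[n] a := by
  refine or_iff_not_imp_left.2 fun hfix => ?_
  push Not at hfix
  set d : ℕ → ℝ := fun n => ρ (S^[n] a) (S^[n + 1] a)
  have hd_pos : ∀ n, 0 < d n := fun n => (hρ0 _ _).lt_of_ne fun h0 =>
    hfix n (by rw [IsFixedPt, ← iterate_succ_apply' S n]; exact ((hρ _ _).1 h0.symm).symm)
  have hd_anti : StrictAnti d := strictAnti_nat_of_succ_lt fun n =>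
    (kannan_dist_iterate_succ_le hS (by linarith) a n).trans_lt
      (mul_lt_of_lt_one_left (hd_pos n) ((div_lt_one (by linarith)).2 (by linarith)))
  intro i j hij
  refine hd_anti.injective ?_
  simp only [d, iterate_succ_apply']
  exact congrArg (fun y => ρ y (S y)) hij

end Kannan

theorem mul_lt_one_of_lt_one_div_csSup {T : Set ℝ} (hT : BddAbove T) {t κ : ℝ} (ht : t ∈ T)
    (ht0 : 0 < t) (hκ : κ < 1 / sSup T) : κ * t < 1 :=
  (lt_div_iff₀ ht0).1 (hκ.trans_le (one_div_le_one_div_of_le ht0 (le_csSup hT ht)))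

namespace IsBvTheta

variable {E : Type*} {ρ θ : E → E → ℝ} {v : ℕ}

theorem dist_le_of_injective_chain (h : IsBvTheta E ρ θ v) {p q : E} (hpq : p ≠ q) {z : ℕ → E}
    (hz : Injective z) (hzp : ∀ i, z i ≠ p) (hzq : ∀ i, z i ≠ q) :
    ρ p q ≤ θ p q * (ρ p (z 1) + ∑ i ∈ Icc 1 (v - 1), ρ (z i) (z (i + 1)) + ρ (z v) q) :=
  h.quad p q z hpq (fun i _ => ⟨hzp i, hzq i⟩) fun _ _ _ _ hij => hz.ne hij

theorem dist_le_of_tendsto_of_injective (h : IsBvTheta E ρ θ v) {u : ℕ → E} (hu : Injective u)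
    (hd : Tendsto (fun n => ρ (u n) (u (n + 1))) atTop (𝓝 0)) {p q : E} (hpq : p ≠ q) {a : ℝ}
    {f : ℕ → ℝ} (hf : Tendsto f atTop (𝓝 0))
    (hend : ∀ n, ρ p (u (n + 1)) + ρ (u (n + v)) q ≤ a + f n) :
    ρ p q ≤ θ p q * a := by
  set s : ℕ → ℝ := fun n => ∑ i ∈ Icc 1 (v - 1), ρ (u (n + i)) (u (n + (i + 1)))
  have hs : Tendsto s atTop (𝓝 0) := by
    simpa [add_assoc] using
      tendsto_finsetSum (Icc 1 (v - 1)) fun i _ => hd.comp (tendsto_add_atTop_nat i)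
  have hlim : Tendsto (fun n => θ p q * (a + f n + s n)) atTop (𝓝 (θ p q * a)) := by
    simpa using ((hf.const_add a).add hs).const_mul (θ p q)
  have havoid : ∀ y, ∀ᶠ n in atTop, u n ≠ y := fun y => by
    simpa only [Nat.cofinite_eq_atTop] using
      hu.tendsto_cofinite.eventually (eventually_cofinite_ne y)
  obtain ⟨N, hN⟩ := eventually_atTop.1 ((havoid p).and (havoid q))
  refine ge_of_tendsto hlim ((eventually_ge_atTop N).mono fun n hn => ?_)
  have hchain := h.dist_le_of_injective_chain hpq (z := fun i => u (n + i))
    (hu.comp (add_right_injective n)) (fun i => (hN _ (by omega)).1) fun i => (hN _ (by omega)).2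
  refine hchain.trans (mul_le_mul_of_nonneg_left ?_ (zero_le_one.trans (h.theta_ge_one p q)))
  simp only [s]
  linarith [hend n]

theorem isFixedPt_of_tendsto_iterate (h : IsBvTheta E ρ θ v) {S : E → E} {β γ : ℝ}
    (hS : IsKannan ρ S β γ) {a x : E}
    (hinj : Injective fun n => S^[n] a)
    (hd : Tendsto (fun n => ρ (S^[n] a) (S^[n + 1] a)) atTop (𝓝 0))
    (hx : Tendsto (fun n => ρ (S^[n] a) x) atTop (𝓝 0))
    (hθ : β * θ (S x) x < 1 ∨ γ * θ x (S x) < 1) : IsFixedPt S x := by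
  by_contra hne
  have hc : 0 < ρ x (S x) := (h.nonneg _ _).lt_of_ne fun h0 => hne ((h.zero_iff _ _).1 h0.symm).symm
  rcases hθ with hθ | hθ
  · have key := h.dist_le_of_tendsto_of_injective hinj hd hne (a := β * ρ x (S x))
      (f := fun n => γ * ρ (S^[n] a) (S^[n + 1] a) + ρ (S^[n + v] a) x)
      (by simpa using (hd.const_mul γ).add (hx.comp (tendsto_add_atTop_nat v))) fun n => by
        have := hS x (S^[n] a)
        rw [← iterate_succ_apply' S n] at this
        linarith
    rw [h.symm] at key
    nlinarith
  · have hx' : Tendsto (fun n => ρ x (S^[n + 1] a)) atTop (𝓝 0) :=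
      (hx.comp (tendsto_add_atTop_nat 1)).congr fun n => h.symm _ _
    have key := h.dist_le_of_tendsto_of_injective hinj hd (Ne.symm hne) (a := γ * ρ x (S x))
      (f := fun n => ρ x (S^[n + 1] a) + β * ρ (S^[n + (v - 1)] a) (S^[n + (v - 1) + 1] a))
      (by simpa using hx'.add ((hd.comp (tendsto_add_atTop_nat (v - 1))).const_mul β))
      fun n => by
        have := hS (S^[n + (v - 1)] a) x
        rw [← iterate_succ_apply' S] at this
        rw [show n + v = n + (v - 1) + 1 by have := h.hv; omega]
        linarith
    nlinarith

end IsBvTheta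

/-- Generalized Kannan fixed point theorem in complete b_v(θ) metric spaces. -/
theorem stmt_15 {E : Type*} (ρ θ : E → E → ℝ) (v : ℕ)
    (h : IsBvTheta E ρ θ v) (hcomp : ThetaComplete ρ)
    (hbdd : ∃ M : ℝ, ∀ u w, θ u w ≤ M)
    (S : E → E) (β γ : ℝ) (hβ : 0 ≤ β) (hγ : 0 ≤ γ) (hsum : β + γ < 1)
    (hΓ : min β γ <
      1 / sSup ((Set.range fun u => θ u (S u)) ∪ (Set.range fun u => θ (S u) u)))
    (hS : ∀ u w, ρ (S u) (S w) ≤ β * ρ u (S u) + γ * ρ w (S w)) :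
    ∃! b : E, S b = b := by
  refine existsUnique_of_exists_of_unique ?_ fun x y =>
    eq_of_isFixedPt_of_kannan h.nonneg h.zero_iff hS
  obtain ⟨a⟩ : Nonempty E := by
    by_contra hE
    rw [not_nonempty_iff] at hE
    -- for empty `E` the bound in `hΓ` is the junk value `1 / sSup ∅ = 0`
    simp only [Set.range_eq_empty, Set.union_empty, Real.sSup_empty, div_zero] at hΓ
    linarith [le_min hβ hγ]
  rcases kannan_exists_isFixedPt_iterate_or_injective h.zero_iff h.nonneg hS hβ hsum a
    with ⟨n, hn⟩ | hinj
  · exact ⟨_, hn⟩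
  obtain ⟨x, hx⟩ := hcomp _ (thetaCauchy_iterate_of_kannan h.nonneg hS hβ hγ hsum a)
  refine ⟨x, h.isFixedPt_of_tendsto_iterate hS hinj
    (tendsto_kannan_dist_iterate h.nonneg hS hβ hsum a) hx ?_⟩
  obtain ⟨M, hM⟩ := hbdd
  have hT : BddAbove ((Set.range fun u => θ u (S u)) ∪ (Set.range fun u => θ (S u) u)) :=
    ⟨M, by rintro t (⟨u, rfl⟩ | ⟨u, rfl⟩) <;> exact hM _ _⟩
  have hθ_pos : ∀ u w, 0 < θ u w := fun u w => zero_lt_one.trans_le (h.theta_ge_one u w)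
  rcases le_total β γ with hle | hle
  · rw [min_eq_left hle] at hΓ
    exact Or.inl (mul_lt_one_of_lt_one_div_csSup hT (Or.inr ⟨x, rfl⟩) (hθ_pos _ _) hΓ)
  · rw [min_eq_right hle] at hΓ
    exact Or.inr (mul_lt_one_of_lt_one_div_csSup hT (Or.inl ⟨x, rfl⟩) (hθ_pos _ _) hΓ)
end
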